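/- Let V be a Hilbert space, ℓ : V → ℝ a bounded linear functional, V_n and W_m finite-dimensional subspaces with β(V_n, W_m) > 0, u ∈ V, and u* the PBDW reconstruction of u from ω = P_{W_m} u. Then |ℓ(u) − ℓ(u*)| ≤ ‖ℓ‖_{V'} · β(V_n, W_m)^{-1} · ‖u − P_{V_n} u‖. -/

import Mathlib

/-!
Write `e = u - u*`. Both `u` and `u*` have the observation `P_{W_m} u`, so `e ∈ W_mᗮ`.
First-order optimality of `u*` says that its residual `P_{V_nᗮ} u*` is orthogonal to `W_mᗮ`,
i.e. lies in `W_m`; hence `P_{V_nᗮ} u = P_{V_nᗮ} e + P_{V_nᗮ} u*` is an orthogonal splitting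
and `‖P_{V_nᗮ} e‖ ≤ ‖P_{V_nᗮ} u‖`. Finally, for `e ∈ W_mᗮ` and `p = P_{V_n} e`,
`‖p‖² = ⟪e, P_{W_mᗮ} p⟫ ≤ ‖e‖ ‖P_{W_mᗮ} p‖ ≤ ‖e‖ √(1 - β²) ‖p‖`, so that
`‖P_{V_nᗮ} e‖² = ‖e‖² - ‖p‖² ≥ β² ‖e‖²`, and `|ℓ(e)| ≤ ‖ℓ‖ ‖e‖` concludes.
-/

open RealInnerProductSpace

section

variable {V : Type*} [NormedAddCommGroup V] [InnerProductSpace ℝ V]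

theorem inner_eq_zero_of_forall_norm_le_norm_add_smul {x y : V}
    (h : ∀ t : ℝ, ‖x‖ ≤ ‖x + t • y‖) : ⟪x, y⟫ = 0 := by
  have hquad (t : ℝ) : 0 ≤ 2 * t * ⟪x, y⟫ + t ^ 2 * ‖y‖ ^ 2 := by
    have h2 := pow_le_pow_left₀ (norm_nonneg x) (h t) 2
    rw [norm_add_sq_real, real_inner_smul_right, norm_smul, Real.norm_eq_abs, mul_pow,
      sq_abs] at h2
    linarith
  have hb : 0 < ‖y‖ ^ 2 + 1 := by positivity
  have := hquad (-⟪x, y⟫ / (‖y‖ ^ 2 + 1))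
  field_simp at this
  nlinarith [sq_nonneg ⟪x, y⟫, sq_nonneg ‖y‖]

theorem starProjection_orthogonal_mem_of_forall_norm_le (K L : Submodule ℝ V)
    [K.HasOrthogonalProjection] [L.HasOrthogonalProjection] {x : V}
    (hmin : ∀ δ ∈ Lᗮ, ‖Kᗮ.starProjection x‖ ≤ ‖Kᗮ.starProjection (x + δ)‖) :
    Kᗮ.starProjection x ∈ L := by
  rw [← L.orthogonal_orthogonal, Submodule.mem_orthogonal']
  intro δ hδ
  rw [← Kᗮ.starProjection_eq_self_iff.mpr (Kᗮ.starProjection_apply_mem x),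
    Submodule.inner_starProjection_left_eq_right]
  refine inner_eq_zero_of_forall_norm_le_norm_add_smul fun t => ?_
  simpa only [map_add, map_smul] using hmin (t • δ) (Lᗮ.smul_mem t hδ)

theorem norm_starProjection_sub_le_of_mem (K L : Submodule ℝ V) [K.HasOrthogonalProjection]
    {x y : V} (hxy : y - x ∈ Lᗮ) (hx : Kᗮ.starProjection x ∈ L) :
    ‖Kᗮ.starProjection (y - x)‖ ≤ ‖Kᗮ.starProjection y‖ := by
  have horth : ⟪Kᗮ.starProjection (y - x), Kᗮ.starProjection x⟫ = 0 := by
    rw [Submodule.inner_starProjection_left_eq_right,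
      Kᗮ.starProjection_eq_self_iff.mpr (Kᗮ.starProjection_apply_mem x)]
    exact (Submodule.mem_orthogonal' _ _).mp hxy _ hx
  have hpyth := norm_add_sq_eq_norm_sq_add_norm_sq_real horth
  rw [← map_add, sub_add_cancel] at hpyth
  exact nonneg_le_nonneg_of_sq_le_sq (norm_nonneg _)
    (hpyth ▸ le_add_of_nonneg_right (mul_self_nonneg _))

/-- The inf-sup constant `β(V_n, W_m)`; it is `0` when `V_n = 0`, since `⨅ ∅ = 0` in `ℝ`. -/
noncomputable def infSupConstant (Vn Wm : Submodule ℝ V) [Wm.HasOrthogonalProjection] : ℝ :=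
  ⨅ v : {v : Vn // (v : V) ≠ 0}, ‖(Wm.orthogonalProjectionOnto (v : V) : V)‖ / ‖(v : V)‖

namespace infSupConstant

variable (Vn Wm : Submodule ℝ V) [Wm.HasOrthogonalProjection]

theorem nonneg : 0 ≤ infSupConstant Vn Wm :=
  Real.iInf_nonneg fun _ => by positivity

theorem mul_norm_le {v : V} (hv : v ∈ Vn) :
    infSupConstant Vn Wm * ‖v‖ ≤ ‖Wm.starProjection v‖ := by
  rcases eq_or_ne v 0 with rfl | hv0
  · simp
  have hbdd : BddBelow (Set.range fun v : {v : Vn // (v : V) ≠ 0} =>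
      ‖(Wm.orthogonalProjectionOnto (v : V) : V)‖ / ‖(v : V)‖) :=
    ⟨0, by rintro _ ⟨w, rfl⟩; positivity⟩
  rw [← le_div_iff₀ (norm_pos_iff.mpr hv0)]
  exact ciInf_le hbdd ⟨⟨v, hv⟩, hv0⟩

theorem le_one : infSupConstant Vn Wm ≤ 1 := by
  by_cases h : ∃ v ∈ Vn, v ≠ 0
  · obtain ⟨v, hv, hv0⟩ := h
    have := (mul_norm_le Vn Wm hv).trans (Wm.norm_starProjection_apply_le v)
    exact (mul_le_iff_le_one_left (norm_pos_iff.mpr hv0)).mp this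
  · have : IsEmpty {v : Vn // (v : V) ≠ 0} := ⟨fun v => h ⟨v, v.1.2, v.2⟩⟩
    simp [infSupConstant, Real.iInf_of_isEmpty]

variable [Vn.HasOrthogonalProjection]

theorem norm_starProjection_sq_le {e : V} (he : e ∈ Wmᗮ) :
    ‖Vn.starProjection e‖ ^ 2 ≤ (1 - infSupConstant Vn Wm ^ 2) * ‖e‖ ^ 2 := by
  set β := infSupConstant Vn Wm
  set p := Vn.starProjection e
  have hp : ‖p‖ ^ 2 = ⟪e, Wmᗮ.starProjection p⟫ := by
    rw [← Submodule.inner_starProjection_left_eq_right, Wmᗮ.starProjection_eq_self_iff.mpr he,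
      real_inner_comm]
    simpa using (Vn.re_inner_starProjection_eq_normSq e).symm
  have hcs : ‖p‖ ^ 2 ≤ ‖e‖ * ‖Wmᗮ.starProjection p‖ := hp ▸ real_inner_le_norm _ _
  have hq : ‖Wmᗮ.starProjection p‖ ^ 2 ≤ (1 - β ^ 2) * ‖p‖ ^ 2 := by
    have hpyth := Wm.norm_sq_eq_add_norm_sq_starProjection p
    have hβp := mul_norm_le Vn Wm (Vn.starProjection_apply_mem e)
    nlinarith [mul_self_le_mul_self (mul_nonneg (nonneg Vn Wm) (norm_nonneg p)) hβp]
  have hβ1 : 0 ≤ 1 - β ^ 2 := by nlinarith [nonneg Vn Wm, le_one Vn Wm]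
  rcases (norm_nonneg p).eq_or_lt with hp0 | hp0
  · rw [← hp0, zero_pow two_ne_zero]
    positivity
  have h4 : ‖p‖ ^ 2 * ‖p‖ ^ 2 ≤ (1 - β ^ 2) * ‖e‖ ^ 2 * ‖p‖ ^ 2 := by
    nlinarith [mul_self_le_mul_self (sq_nonneg _) hcs]
  exact le_of_mul_le_mul_right h4 (by positivity)

theorem mul_norm_le_norm_starProjection_orthogonal {e : V} (he : e ∈ Wmᗮ) :
    infSupConstant Vn Wm * ‖e‖ ≤ ‖Vnᗮ.starProjection e‖ := by
  have hpyth := Vn.norm_sq_eq_add_norm_sq_starProjection e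
  have hp := norm_starProjection_sq_le Vn Wm he
  refine (pow_le_pow_iff_left₀ (mul_nonneg (nonneg Vn Wm) (norm_nonneg e)) (norm_nonneg _)
    two_ne_zero).mp ?_
  nlinarith

end infSupConstant

end

theorem qoi_coarse_error_bound_general
    {V : Type*} [NormedAddCommGroup V] [InnerProductSpace ℝ V]
    (ℓ : V →L[ℝ] ℝ)
    (Vn Wm : Submodule ℝ V) [FiniteDimensional ℝ Vn] [FiniteDimensional ℝ Wm]
    (hβ : 0 < ⨅ v : {v : Vn // (v : V) ≠ 0},
        ‖(Submodule.orthogonalProjectionOnto Wm (v : V) : V)‖ / ‖(v : V)‖)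
    (u ustar : V)
    (hmem : ustar - (Submodule.orthogonalProjectionOnto Wm u : V) ∈ Wmᗮ)
    (hmin : ∀ u' : V, u' - (Submodule.orthogonalProjectionOnto Wm u : V) ∈ Wmᗮ →
      ‖ustar - (Submodule.orthogonalProjectionOnto Vn ustar : V)‖
        ≤ ‖u' - (Submodule.orthogonalProjectionOnto Vn u' : V)‖) :
    |ℓ u - ℓ ustar|
      ≤ ‖ℓ‖ * (⨅ v : {v : Vn // (v : V) ≠ 0},
          ‖(Submodule.orthogonalProjectionOnto Wm (v : V) : V)‖ / ‖(v : V)‖)⁻¹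
        * ‖u - (Submodule.orthogonalProjectionOnto Vn u : V)‖ := by
  change 0 < infSupConstant Vn Wm at hβ
  change _ ≤ ‖ℓ‖ * (infSupConstant Vn Wm)⁻¹ * _
  simp only [← Submodule.starProjection_apply, ← Submodule.starProjection_orthogonal_val]
    at hmem hmin ⊢
  have herr_mem : u - ustar ∈ Wmᗮ := by
    simpa using Wmᗮ.sub_mem (Wm.sub_starProjection_mem_orthogonal u) hmem
  have hres : Vnᗮ.starProjection ustar ∈ Wm :=
    starProjection_orthogonal_mem_of_forall_norm_le Vn Wm fun δ hδ =>
      hmin _ (by simpa [add_sub_right_comm] using Wmᗮ.add_mem hmem hδ)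
  have herr : infSupConstant Vn Wm * ‖u - ustar‖ ≤ ‖Vnᗮ.starProjection u‖ :=
    (infSupConstant.mul_norm_le_norm_starProjection_orthogonal Vn Wm herr_mem).trans
      (norm_starProjection_sub_le_of_mem Vn Wm herr_mem hres)
  calc |ℓ u - ℓ ustar| = ‖ℓ (u - ustar)‖ := by rw [map_sub, Real.norm_eq_abs]
    _ ≤ ‖ℓ‖ * ‖u - ustar‖ := ℓ.le_opNorm _
    _ ≤ ‖ℓ‖ * ((infSupConstant Vn Wm)⁻¹ * ‖Vnᗮ.starProjection u‖) := by
      gcongr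
      rwa [le_inv_mul_iff₀ hβ]
    _ = _ := (mul_assoc _ _ _).symm

/-- Coarse error bound for a linear Quantity of Interest `ℓ` evaluated on the
PBDW reconstruction: `|ℓ(u) − ℓ(u*)| ≤ ‖ℓ‖ β⁻¹ ‖u − P_{Vₙ} u‖`. -/
theorem qoi_coarse_error_bound
    {V : Type*} [NormedAddCommGroup V] [InnerProductSpace ℝ V] [CompleteSpace V]
    (ℓ : V →L[ℝ] ℝ)
    (Vn Wm : Submodule ℝ V) [FiniteDimensional ℝ Vn] [FiniteDimensional ℝ Wm]
    (hβ : 0 < ⨅ v : {v : Vn // (v : V) ≠ 0},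
        ‖(Submodule.orthogonalProjectionOnto Wm (v : V) : V)‖ / ‖(v : V)‖)
    (u ustar : V)
    (hmem : ustar - (Submodule.orthogonalProjectionOnto Wm u : V) ∈ Wmᗮ)
    (hmin : ∀ u' : V, u' - (Submodule.orthogonalProjectionOnto Wm u : V) ∈ Wmᗮ →
      ‖ustar - (Submodule.orthogonalProjectionOnto Vn ustar : V)‖
        ≤ ‖u' - (Submodule.orthogonalProjectionOnto Vn u' : V)‖) :
    |ℓ u - ℓ ustar|
      ≤ ‖ℓ‖ * (⨅ v : {v : Vn // (v : V) ≠ 0},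
          ‖(Submodule.orthogonalProjectionOnto Wm (v : V) : V)‖ / ‖(v : V)‖)⁻¹
        * ‖u - (Submodule.orthogonalProjectionOnto Vn u : V)‖ :=
  qoi_coarse_error_bound_general ℓ Vn Wm hβ u ustar hmem hmin
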